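/- arXiv:0805.0453 — 5 statements merged into one kernel-verified Lean document; each statement's English description precedes it below -/
import Mathlib

section
/- For the recursively defined rotation permutations P^S_m in S₃, one has P^S_{6n+3} = (1 3) and P^S_{6n} = 1 for every integer n and either state S ∈ {+,−}. -/
namespace BraidQG

/-- Generators of the braid group `B₃`: `true ↦ u`, `false ↦ d`. -/
abbrev Gen := Bool

/-- Crossing sequences, viewed as elements of the free group on `u, d`. -/
abbrev Word := FreeGroup Gen

/-- The upper crossing generator `u`. -/
def u : Word := FreeGroup.of true

/-- The lower crossing generator `d`. -/
def d : Word := FreeGroup.of false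

/-- Node states are `Bool`: `true ↦ +`, `false ↦ −`.  `negPow m S = (−)^m S`. -/
def negPow (m : ℤ) (S : Bool) : Bool := if Even m then S else !S

/-- The sign value of a state, in `{1, −1}`. -/
def sgn (S : Bool) : ℤ := if S then 1 else -1

/-- The rotation word `X_l(S, m)`:
`X_l(+,m) = (ud)^(−m/2)` (`m` even), `d(ud)^((−1−m)/2)` (`m` odd);
`X_l(−,m) = (du)^(−m/2)` (`m` even), `u(du)^((−1−m)/2)` (`m` odd). -/
def Xl (S : Bool) (m : ℤ) : Word :=
  if Even m then (if S then u * d else d * u) ^ (-(m / 2))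
  else (if S then d else u) * (if S then u * d else d * u) ^ ((-1 - m) / 2)

/-- The rotation word `X_r(S, n)`:
`X_r(+,n) = (ud)^(−n/2)` (`n` even), `(ud)^((1−n)/2) d⁻¹` (`n` odd);
`X_r(−,n) = (du)^(−n/2)` (`n` even), `(du)^((1−n)/2) u⁻¹` (`n` odd). -/
def Xr (S : Bool) (n : ℤ) : Word :=
  if Even n then (if S then u * d else d * u) ^ (-(n / 2))
  else (if S then u * d else d * u) ^ ((1 - n) / 2) * (if S then d else u)⁻¹

/-- The number of crossings of a crossing sequence: the length of the (reduced) word. -/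
def len (X : Word) : ℕ := X.toWord.length

/-- The sum of crossing numbers of a word: `u, d` count `+1`, `u⁻¹, d⁻¹` count `−1`. -/
def crossSum (X : Word) : ℤ := (X.toWord.map (fun p => if p.2 then (1 : ℤ) else -1)).sum

/-- The transposition `(1 2)` on strand positions `{1,2,3} ≅ {0,1,2}`. -/
def c12 : Equiv.Perm (Fin 3) := Equiv.swap 0 1

/-- The transposition `(2 3)` on strand positions. -/
def c23 : Equiv.Perm (Fin 3) := Equiv.swap 1 2

/-- One `π/3`-rotation step acting on pairs (state, permutation accumulated so far):
`step (S, p) = ((−)S, P^S₁ * p)` with `P⁺₁ = (1 2)` and `P⁻₁ = (2 3)`. -/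
def step : Equiv.Perm (Bool × Equiv.Perm (Fin 3)) where
  toFun x := (!x.1, (if x.1 then c12 else c23) * x.2)
  invFun x := (!x.1, (if !x.1 then c12 else c23) * x.2)
  left_inv := by
    rintro ⟨b, p⟩
    cases b <;> simp [c12, c23, ← mul_assoc, Equiv.swap_mul_self]
  right_inv := by
    rintro ⟨b, p⟩
    cases b <;> simp [c12, c23, ← mul_assoc, Equiv.swap_mul_self]

/-- The rotation permutation `P^S_m ∈ S₃`, defined by the recursion
`P^S_0 = 1`, `P^S_{m+1} = P^{(−)^m S}_1 * P^S_m` (and the corresponding downward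
recursion), realized as the `m`-th power of the single rotation step. -/
def P (S : Bool) (m : ℤ) : Equiv.Perm (Fin 3) := ((step ^ m) (S, 1)).2

/-- A braid (diagram) as the `8`-tuple `(T_l, S_l, (T_a,T_b,T_c), X, S_r, T_r)`;
the internal-twist triple is a function `Fin 3 → ℤ`. -/
structure Braid where
  Tl : ℤ
  Sl : Bool
  T : Fin 3 → ℤ
  X : Word
  Sr : Bool
  Tr : ℤ

/-- The general rotation `R_{m,n}` on braids. -/
def rotate (m n : ℤ) (B : Braid) : Braid where
  Tl := B.Tl + m
  Sl := negPow m B.Sl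
  T := fun i => B.T (P B.Sl m i) - m - n
  X := Xl B.Sl m * B.X * Xr B.Sr n
  Sr := negPow n B.Sr
  Tr := B.Tr + n

/-- The effective twist number `Θ = T_l + T_r + (T_a + T_b + T_c) − 2 Σᵢ xᵢ`. -/
def Θ (B : Braid) : ℤ :=
  B.Tl + B.Tr + (B.T 0 + B.T 1 + B.T 2) - 2 * crossSum B.X

/-- The effective state `χ = (−1)^{|X|} S_l S_r ∈ {1, −1}`. -/
def χ (B : Braid) : ℤ := (-1) ^ len B.X * sgn B.Sl * sgn B.Sr

/-- `Reachable A B`: `B` is obtained from `A` by some finite sequence of rotations. -/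
def Reachable : Braid → Braid → Prop :=
  Relation.ReflTransGen (fun A B => ∃ m n : ℤ, B = rotate m n A)

/-- A braid is actively-interacting iff it can be rotated to a trivial braid diagram
(empty crossing sequence, equal end-node states). -/
def Active (B : Braid) : Prop :=
  ∃ B', Reachable B B' ∧ B'.X = 1 ∧ B'.Sl = B'.Sr

/-- The defining braid relation `udu = dud` of `B₃`. -/
def braidRel : Set (FreeGroup Gen) := {u * d * u * (d * u * d)⁻¹}

/-- The braid group `B₃ = ⟨u, d ∣ udu = dud⟩`. -/
abbrev B3 := PresentedGroup braidRel

/-- The canonical projection of crossing sequences into `B₃`. -/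
def pr : FreeGroup Gen →* B3 := FreeGroup.lift fun b => PresentedGroup.of b

/-- The generator `u` of `B₃`. -/
def bu : B3 := PresentedGroup.of true

/-- The generator `d` of `B₃`. -/
def bd : B3 := PresentedGroup.of false

/-- The bar map swapping `u ↔ d` (and `u⁻¹ ↔ d⁻¹`) letterwise. -/
def bar : Word →* Word := FreeGroup.map Bool.not

/-- The simultaneous rotation `R_{3k,−3k}` on braids: external twists shift by `±3k`,
states flip by `(−1)^k`, the triple is permuted by `(1 3)^k`, and the letter
swap `u ↔ d` is applied to `X` exactly when `k` is odd. -/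
def rot3k (k : ℤ) (B : Braid) : Braid where
  Tl := B.Tl + 3 * k
  Sl := negPow k B.Sl
  T := fun i => B.T (((Equiv.swap 0 2 : Equiv.Perm (Fin 3)) ^ k) i)
  X := if Even k then B.X else bar B.X
  Sr := negPow k B.Sr
  Tr := B.Tr - 3 * k

/-- The interaction `B + B'` of an active braid `B` (trivial representative)
onto a passive braid `B'` (zero-external-twist representative), from the left. -/
def interact (B B' : Braid) : Braid where
  Tl := 0
  Sl := negPow B.Tl B.Sl
  T := fun i =>
    B.T (P B.Sl (-B.Tl) i) + B'.T (P (negPow B.Tr B.Sl) (-B.Tl - B.Tr) i)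
      + (B.Tl + B.Tr)
  X := Xl (negPow B.Tr B.Sl) (-B.Tl - B.Tr) * B'.X
  Sr := B'.Sr
  Tr := 0

/-- The permutation `σ_X ∈ S₃` induced by a crossing sequence `X`
(`u` induces `(1 2)`, `d` induces `(2 3)`). -/
def σX : Word →* Equiv.Perm (Fin 3) := FreeGroup.lift fun b => if b then c12 else c23

/-- The interaction `B' + B` of an active braid `B` (with `T_r = 0`, rotated to its
right-twist-only trivial representative) onto a passive braid `B'` from the right. -/
def interactR (B' B : Braid) : Braid where
  Tl := 0
  Sl := B'.Sl
  T := fun i => (B'.T i + B.Tl) + B.T (P B.Sl (-B.Tl) ((σX B'.X)⁻¹ i))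
  X := B'.X * Xr B'.Sr (-B.Tl)
  Sr := B'.Sl
  Tr := 0


/-- `P^S_{6n+3} = (1 3)` and `P^S_{6n} = 1` for every `n ∈ ℤ`
and either state `S`. -/
theorem P_six (S : Bool) (n : ℤ) :
    P S (6 * n + 3) = Equiv.swap (0 : Fin 3) 2 ∧ P S (6 * n) = 1 := by
  have h6 : step ^ (6 : ℤ) = 1 := by
    have : step ^ (6 : ℕ) = 1 := by decide
    rw [show (6 : ℤ) = ((6 : ℕ) : ℤ) by norm_num, zpow_natCast, this]
  have h6n : step ^ (6 * n) = 1 := by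
    rw [zpow_mul, h6, one_zpow]
  constructor
  · have : P S (6 * n + 3) = P S 3 := by
      unfold P
      rw [zpow_add, h6n, one_mul]
    rw [this]
    have h3 : P S 3 = ((step ^ (3 : ℕ)) (S, 1)).2 := by
      unfold P
      rw [show (3 : ℤ) = ((3 : ℕ) : ℤ) by norm_num, zpow_natCast]
    rw [h3]
    cases S <;> decide
  · unfold P
    rw [h6n]
    rfl

end BraidQG
end

section
/- The effective twist number Θ = T_l + T_r + (T_a + T_b + T_c) − 2·Σᵢ xᵢ of a braid is invariant under any general rotation R_{m,n}. -/
namespace BraidQG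

/-!
The crossing sum is a homomorphism from the free group to `ℤ` sending both generators to `1`.
Hence the rotation words `X_l(S, m)` and `X_r(S, n)` contribute `-m - n` to `Σ xᵢ`, so
`-2 Σ xᵢ` grows by `2(m + n)`; the external twists grow by `m + n`; and the internal twists,
being permuted and each lowered by `m + n`, lose `3(m + n)` in total.
-/

def crossSumHom : Word →* Multiplicative ℤ := FreeGroup.lift fun _ => Multiplicative.ofAdd 1

theorem crossSum_eq_toAdd_crossSumHom (X : Word) : crossSum X = (crossSumHom X).toAdd := by
  conv_rhs => rw [← FreeGroup.mk_toWord (x := X)]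
  rw [crossSumHom, FreeGroup.lift_mk, crossSum]
  induction X.toWord with
  | nil => rfl
  | cons a L ih =>
    obtain ⟨_, _ | _⟩ := a <;> simp [ih]

theorem crossSum_mul (X Y : Word) : crossSum (X * Y) = crossSum X + crossSum Y := by
  simp only [crossSum_eq_toAdd_crossSumHom, map_mul, toAdd_mul]

theorem crossSum_inv (X : Word) : crossSum X⁻¹ = -crossSum X := by
  simp only [crossSum_eq_toAdd_crossSumHom, map_inv, toAdd_inv]

theorem crossSum_zpow (X : Word) (k : ℤ) : crossSum (X ^ k) = k * crossSum X := by
  simp only [crossSum_eq_toAdd_crossSumHom, map_zpow, toAdd_zpow, smul_eq_mul]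

theorem crossSum_of (b : Gen) : crossSum (FreeGroup.of b) = 1 := by
  rw [crossSum_eq_toAdd_crossSumHom, crossSumHom, FreeGroup.lift_apply_of, toAdd_ofAdd]

theorem crossSum_u : crossSum u = 1 := crossSum_of true

theorem crossSum_d : crossSum d = 1 := crossSum_of false

theorem crossSum_Xl (S : Bool) (m : ℤ) : crossSum (Xl S m) = -m := by
  rw [Xl]
  split_ifs with hm <;> rw [Int.even_iff] at hm <;>
    simp only [crossSum_mul, crossSum_zpow, crossSum_u, crossSum_d] <;> omega

theorem crossSum_Xr (S : Bool) (n : ℤ) : crossSum (Xr S n) = -n := by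
  rw [Xr]
  split_ifs with hn <;> rw [Int.even_iff] at hn <;>
    simp only [crossSum_mul, crossSum_zpow, crossSum_inv, crossSum_u, crossSum_d] <;> omega

theorem sum_three_comp_perm {M : Type*} [AddCommMonoid M] (σ : Equiv.Perm (Fin 3))
    (f : Fin 3 → M) : f (σ 0) + f (σ 1) + f (σ 2) = f 0 + f 1 + f 2 := by
  simpa only [Fin.sum_univ_three] using Equiv.sum_comp σ f

/-- the effective twist number
`Θ = T_l + T_r + (T_a + T_b + T_c) − 2 Σᵢ xᵢ` is invariant under any general
rotation `R_{m,n}`. -/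
theorem theta_rotation_invariant (m n : ℤ) (B : Braid) :
    Θ (rotate m n B) = Θ B := by
  have hT := sum_three_comp_perm (P B.Sl m) B.T
  simp only [Θ, rotate, crossSum_mul, crossSum_Xl, crossSum_Xr]
  linear_combination hT

end BraidQG
end

section
/- For any word X = x₁x₂⋯x_N in the free group on generators u, d, and any states S_l, S_r, the conjugation X_l(S_l, ±3)·X·X_r(S_r, ∓3) equals the word X̄ = x̄₁x̄₂⋯x̄_N obtained by swapping u ↔ d (and u⁻¹ ↔ d⁻¹) in each letter, as elements of the braid group B₃ = ⟨u,d | udu = dud⟩. -/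
namespace BraidQG

/-! In `B₃` the rotation words `X_l(S, ±3)` and `X_r(S, ∓3)` are `Δ^{∓1}` and `Δ^{±1}`, whatever
the state `S`, where `Δ = udu = dud` is the half twist. Since `Δu = dΔ` and `Δd = uΔ`,
conjugation by `Δ` and by `Δ⁻¹` both act on words as the letter swap. -/

lemma pr_eq_mk : pr = PresentedGroup.mk braidRel :=
  FreeGroup.ext_hom _ _ fun _ => rfl

def Δ : B3 := pr (u * d * u)

lemma pr_dud : pr (d * u * d) = Δ := by
  rw [Δ, pr_eq_mk]
  exact (PresentedGroup.mk_eq_mk_of_mul_inv_mem (Set.mem_singleton _)).symm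

lemma Δ_mul_pr_of (b : Bool) : Δ * pr (.of b) = pr (.of !b) * Δ := by
  cases b
  · calc Δ * pr d = pr u * pr (d * u * d) := by rw [Δ]; simp only [map_mul, mul_assoc]
      _ = pr u * Δ := by rw [pr_dud]
  · calc Δ * pr u = pr d * pr (u * d * u) := by rw [← pr_dud]; simp only [map_mul, mul_assoc]
      _ = pr d * Δ := rfl

lemma bar_of (b : Bool) : bar (.of b) = .of !b := FreeGroup.map.of

lemma pr_bar_eq_conj (X : Word) : pr (bar X) = Δ * pr X * Δ⁻¹ := by
  suffices pr.comp bar = (MulAut.conj Δ).toMonoidHom.comp pr from DFunLike.congr_fun this X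
  refine FreeGroup.ext_hom _ _ fun b => ?_
  simp only [MonoidHom.comp_apply, bar_of, MulEquiv.coe_toMonoidHom, MulAut.conj_apply,
    Δ_mul_pr_of, mul_inv_cancel_right]

lemma pr_bar_eq_inv_conj (X : Word) : pr (bar X) = Δ⁻¹ * pr X * Δ := by
  suffices pr.comp bar = (MulAut.conj Δ⁻¹).toMonoidHom.comp pr from DFunLike.congr_fun this X
  refine FreeGroup.ext_hom _ _ fun b => ?_
  simp only [MonoidHom.comp_apply, bar_of, MulEquiv.coe_toMonoidHom, MulAut.conj_apply, inv_inv,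
    mul_assoc, eq_inv_mul_iff_mul_eq, Δ_mul_pr_of, Bool.not_not]

lemma pr_Xl_three (S : Bool) : pr (Xl S 3) = Δ⁻¹ := by
  cases S
  · rw [show Xl false 3 = (d * u * d)⁻¹ by decide, map_inv, pr_dud]
  · rw [show Xl true 3 = (u * d * u)⁻¹ by decide, map_inv, Δ]

lemma pr_Xl_neg_three (S : Bool) : pr (Xl S (-3)) = Δ := by
  cases S
  · rw [show Xl false (-3) = u * d * u by decide, Δ]
  · rw [show Xl true (-3) = d * u * d by decide, pr_dud]

lemma pr_Xr_three (S : Bool) : pr (Xr S 3) = Δ⁻¹ := by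
  cases S
  · rw [show Xr false 3 = (u * d * u)⁻¹ by decide, map_inv, Δ]
  · rw [show Xr true 3 = (d * u * d)⁻¹ by decide, map_inv, pr_dud]

lemma pr_Xr_neg_three (S : Bool) : pr (Xr S (-3)) = Δ := by
  cases S
  · rw [show Xr false (-3) = d * u * d by decide, pr_dud]
  · rw [show Xr true (-3) = u * d * u by decide, Δ]

/-- for any word `X` and states `S_l, S_r`, the conjugation
`X_l(S_l, ±3) · X · X_r(S_r, ∓3)` equals the word `X̄` obtained by swapping
`u ↔ d` in each letter, as elements of `B₃` (the sign `±` is `ε`). -/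
theorem conj_three_eq_bar (X : Word) (Sl Sr : Bool) (ε : Bool) :
    pr (Xl Sl (if ε then 3 else -3)) * pr X * pr (Xr Sr (if ε then -3 else 3))
      = pr (bar X) := by
  cases ε
  · rw [if_neg Bool.false_ne_true, if_neg Bool.false_ne_true, pr_Xl_neg_three, pr_Xr_three,
      pr_bar_eq_conj]
  · rw [if_pos rfl, if_pos rfl, pr_Xl_three, pr_Xr_neg_three, pr_bar_eq_inv_conj]

end BraidQG
end

section
/- For one-crossing words: for each x₁ ∈ {u, d, u⁻¹, d⁻¹} and each choice of signs, X_l(S_l, ±3)·x₁·X_r(S_r, ∓3) = x̄₁ in the braid group B₃, where x̄₁ swaps u ↔ d. -/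
namespace BraidQG

lemma pr_u : pr u = bu := rfl
lemma pr_d : pr d = bd := rfl

lemma braid_rel : bu * bd * bu = bd * bu * bd := by
  have h : pr (u * d * u * (d * u * d)⁻¹) = 1 := by
    rw [pr_eq_mk]
    exact (QuotientGroup.eq_one_iff _).mpr (Subgroup.subset_normalClosure rfl)
  simp only [map_mul, map_inv, pr_u, pr_d, mul_inv_eq_one] at h
  exact h

lemma pr_Xl3 (S : Bool) : pr (Xl S 3) = (bu * bd * bu)⁻¹ := by
  have h1 : ¬ Even (3:ℤ) := by decide
  have h2 : ((-1 - 3)/2 : ℤ) = -2 := by decide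
  cases S <;>
    simp only [Xl, h1, if_false, if_true, Bool.false_eq_true, h2, map_mul, map_zpow, pr_u, pr_d]
  · rw [braid_rel]
    simp [zpow_neg, zpow_ofNat, pow_two, mul_inv_rev, mul_assoc]
  · simp [zpow_neg, zpow_ofNat, pow_two, mul_inv_rev, mul_assoc]

lemma pr_Xlm3 (S : Bool) : pr (Xl S (-3)) = bu * bd * bu := by
  have h1 : ¬ Even (-3:ℤ) := by decide
  have h2 : ((-1 - (-3))/2 : ℤ) = 1 := by decide
  cases S <;>
    simp only [Xl, h1, if_false, if_true, Bool.false_eq_true, h2, map_mul, map_zpow, pr_u, pr_d]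
  · simp [mul_assoc]
  · rw [braid_rel]
    simp [mul_assoc]

lemma pr_Xr3 (S : Bool) : pr (Xr S 3) = (bu * bd * bu)⁻¹ := by
  have h1 : ¬ Even (3:ℤ) := by decide
  have h2 : ((1 - 3)/2 : ℤ) = -1 := by decide
  cases S <;>
    simp only [Xr, h1, if_false, if_true, Bool.false_eq_true, h2, map_mul, map_zpow, map_inv,
      pr_u, pr_d]
  · simp [zpow_neg, mul_inv_rev, mul_assoc]
  · rw [braid_rel]
    simp [zpow_neg, mul_inv_rev, mul_assoc]

lemma pr_Xrm3 (S : Bool) : pr (Xr S (-3)) = bu * bd * bu := by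
  have h1 : ¬ Even (-3:ℤ) := by decide
  have h2 : ((1 - (-3))/2 : ℤ) = 2 := by decide
  cases S <;>
    simp only [Xr, h1, if_false, if_true, Bool.false_eq_true, h2, map_mul, map_zpow, map_inv,
      pr_u, pr_d]
  · rw [braid_rel]
    simp [zpow_ofNat, pow_two, mul_assoc]
  · simp [zpow_ofNat, pow_two, mul_assoc]

lemma hswap (b : Bool) :
    bu * bd * bu * pr (FreeGroup.of b) = pr (FreeGroup.of (!b)) * (bu * bd * bu) := by
  cases b
  · show bu * bd * bu * bd = bu * (bu * bd * bu)
    conv_rhs => rw [braid_rel]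
    simp [mul_assoc]
  · show bu * bd * bu * bu = bd * (bu * bd * bu)
    rw [← mul_assoc, ← mul_assoc, ← braid_rel]

lemma conj1 (b : Bool) :
    (bu * bd * bu) * pr (FreeGroup.of b) * (bu * bd * bu)⁻¹ = pr (FreeGroup.of (!b)) := by
  rw [hswap]
  exact mul_inv_cancel_right _ _

lemma conj2 (b : Bool) :
    (bu * bd * bu)⁻¹ * pr (FreeGroup.of b) * (bu * bd * bu) = pr (FreeGroup.of (!b)) := by
  have h := hswap (!b)
  rw [Bool.not_not] at h
  rw [mul_assoc, ← h, ← mul_assoc, inv_mul_cancel, one_mul]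

lemma conj_inv {G : Type*} [Group G] (a b h k : G) (hab : a * b = 1) (H : a * h * b = k) :
    a * h⁻¹ * b = k⁻¹ := by
  obtain rfl : b = a⁻¹ := (inv_eq_of_mul_eq_one_right hab).symm
  rw [← H]
  simp [mul_inv_rev, mul_assoc]

lemma conj1inv (b : Bool) :
    (bu * bd * bu) * (pr (FreeGroup.of b))⁻¹ * (bu * bd * bu)⁻¹ = (pr (FreeGroup.of (!b)))⁻¹ :=
  conj_inv _ _ _ _ (mul_inv_cancel _) (conj1 b)

lemma conj2inv (b : Bool) :
    (bu * bd * bu)⁻¹ * (pr (FreeGroup.of b))⁻¹ * (bu * bd * bu) = (pr (FreeGroup.of (!b)))⁻¹ :=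
  conj_inv _ _ _ _ (inv_mul_cancel _) (conj2 b)

/-- for a single crossing `x₁ ∈ {u, d, u⁻¹, d⁻¹}` (generator `x`,
sign `pos`) and each choice of signs, `X_l(S_l, ±3) · x₁ · X_r(S_r, ∓3) = x̄₁`
in `B₃`, where the bar swaps `u ↔ d`. -/
theorem conj_three_single_crossing (Sl Sr : Bool) (ε : Bool) (x pos : Bool) :
    pr (Xl Sl (if ε then 3 else -3))
        * (if pos then pr (FreeGroup.of x) else (pr (FreeGroup.of x))⁻¹)
        * pr (Xr Sr (if ε then -3 else 3))
      = (if pos then pr (FreeGroup.of (!x)) else (pr (FreeGroup.of (!x)))⁻¹) := by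
  cases ε <;> cases pos <;>
    simp only [if_true, if_false, Bool.false_eq_true, pr_Xl3, pr_Xlm3, pr_Xr3, pr_Xrm3]
  · exact conj1inv x
  · exact conj1 x
  · exact conj2inv x
  · exact conj2 x

end BraidQG
end

section
/- Under interaction of an active braid B with a passive braid B' producing B'', the effective state is multiplicatively conserved: χ_{B''} = χ_B · χ_{B'}. -/
namespace FreeGroup

variable {α : Type*}

def lengthSign : FreeGroup α →* ℤˣ := FreeGroup.lift fun _ => -1

theorem lengthSign_mk (L : List (α × Bool)) : lengthSign (mk L) = (-1) ^ L.length := by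
  simp [lengthSign, lift_mk]

theorem lengthSign_eq_neg_one_pow_length [DecidableEq α] (X : FreeGroup α) :
    lengthSign X = (-1) ^ X.toWord.length := by
  conv_lhs => rw [← mk_toWord (x := X)]
  exact lengthSign_mk _

end FreeGroup

namespace BraidQG

open FreeGroup (lengthSign)

theorem neg_one_pow_len_eq_lengthSign (X : Word) : (-1 : ℤ) ^ len X = lengthSign X := by
  rw [FreeGroup.lengthSign_eq_neg_one_pow_length, len]
  push_cast
  rfl

theorem lengthSign_Xl (S : Bool) (m : ℤ) : lengthSign (Xl S m) = m.negOnePow := by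
  have hu : lengthSign u = -1 := FreeGroup.lift_apply_of
  have hd : lengthSign d = -1 := FreeGroup.lift_apply_of
  rcases Int.even_or_odd m with hm | hm
  · cases S <;> simp [Xl, hm, hu, hd, Int.negOnePow_even m hm]
  · cases S <;> simp [Xl, Int.not_even_iff_odd.mpr hm, hu, hd, Int.negOnePow_odd m hm]

theorem sgn_negPow (m : ℤ) (S : Bool) : sgn (negPow m S) = m.negOnePow * sgn S := by
  rcases Int.even_or_odd m with hm | hm
  · simp [negPow, hm, Int.negOnePow_even m hm]
  · cases S <;> simp [negPow, sgn, Int.not_even_iff_odd.mpr hm, Int.negOnePow_odd m hm]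

theorem χ_eq_one_of_trivial {B : Braid} (hX : B.X = 1) (hS : B.Sl = B.Sr) : χ B = 1 := by
  cases h : B.Sr <;> simp [χ, hX, hS, h, len, sgn]

theorem chi_multiplicative_under_interaction_general (B B' : Braid)
    (hX : B.X = 1) (hS : B.Sl = B.Sr)
    (hcond : negPow B.Tr B.Sl = B'.Sl) :
    χ (interact B B') = χ B * χ B' := by
  have hsigns : (-B.Tl - B.Tr).negOnePow * B.Tl.negOnePow = B.Tr.negOnePow := by
    rw [show -B.Tl - B.Tr = -(B.Tr + B.Tl) by ring, Int.negOnePow_neg, Int.negOnePow_add,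
      mul_assoc, Int.units_mul_self, mul_one]
  have hlen : (-1 : ℤ) ^ len (interact B B').X = (-B.Tl - B.Tr).negOnePow * (-1) ^ len B'.X := by
    rw [neg_one_pow_len_eq_lengthSign, neg_one_pow_len_eq_lengthSign, interact, map_mul,
      lengthSign_Xl, Units.val_mul]
  rw [χ_eq_one_of_trivial hX hS, one_mul, χ, χ, hlen, ← hcond]
  simp only [interact, sgn_negPow, ← hsigns, Units.val_mul]
  ring

/-- under interaction of an active braid `B` with a passive braid
`B'` producing `B''`, the effective state is multiplicatively conserved:
`χ_{B''} = χ_B · χ_{B'}`. -/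
theorem chi_multiplicative_under_interaction (B B' : Braid)
    (hX : B.X = 1) (hS : B.Sl = B.Sr)
    (hl : B'.Tl = 0) (hr : B'.Tr = 0)
    (hcond : negPow B.Tr B.Sl = B'.Sl) :
    χ (interact B B') = χ B * χ B' :=
  chi_multiplicative_under_interaction_general B B' hX hS hcond

end BraidQG
end
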